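/- arXiv:2404.13662 — 2 statements merged into one kernel-verified Lean document; each statement's English description precedes it below -/
import Mathlib

section
/- Let G be a symmetric n×n real matrix with nonnegative entries, and let β ∈ (0,1), δ > 0, μ ≥ 0 satisfy μ < βδ and max{(δ+μ)/(1+β), (δ−μ)/(1−β)}·ρ(G) < 1, where ρ(G) is the spectral radius of G. Then for every real eigenvalue λ of G, β − μλ > 0; consequently the matrix M^- − M^+, where M^+ = ((1+β)I − (δ+μ)G)^{-1} and M^- = ((1−β)I − (δ−μ)G)^{-1}, is invertible. -/
/-!
`M⁻ - M⁺ = M⁻ ((M⁺)⁻¹ - (M⁻)⁻¹) M⁺ = M⁻ (2β I - 2μ G) M⁺`, so it suffices that each of the three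
factors `c I - d G` is invertible, i.e. that `c ≠ d λ` for every eigenvalue `λ ≤ ρ(G)` of `G`. For
the two resolvents this is the uniqueness assumption; for the middle factor,
`(δ - μ) ρ(G) < 1 - β` together with `μ < β δ` gives `μ λ ≤ μ ρ(G) < β`.
-/

open Matrix

/-- The spectral radius of a real matrix: the supremum of the absolute
values of its (real) eigenvalues. -/
noncomputable def specRad {n : ℕ} (G : Matrix (Fin n) (Fin n) ℝ) : ℝ :=
  sSup ((fun l => |l|) '' spectrum ℝ G)

theorem abs_le_specRad {n : ℕ} (G : Matrix (Fin n) (Fin n) ℝ) {l : ℝ}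
    (hl : l ∈ spectrum ℝ G) : |l| ≤ specRad G :=
  le_csSup ((Matrix.finite_spectrum G).image _).bddAbove ⟨l, hl, rfl⟩

theorem isUnit_smul_one_sub_smul {K A : Type*} [Field K] [Ring A] [Algebra K A] {a : A}
    {c d : K} (hc : c ≠ 0) (h : ∀ l ∈ spectrum K a, c ≠ d * l) :
    IsUnit (c • (1 : A) - d • a) := by
  rcases eq_or_ne d 0 with rfl | hd
  · simpa [← Algebra.algebraMap_eq_smul_one] using (isUnit_iff_ne_zero.2 hc).map (algebraMap K A)
  · have hcd : c / d ∉ spectrum K a := fun hl => h _ hl (mul_div_cancel₀ c hd).symm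
    have key : c • (1 : A) - d • a = algebraMap K A d * (algebraMap K A (c / d) - a) := by
      rw [mul_sub, ← map_mul, mul_div_cancel₀ c hd, Algebra.algebraMap_eq_smul_one,
        Algebra.algebraMap_eq_smul_one, smul_one_mul]
    rw [key]
    exact ((isUnit_iff_ne_zero.2 hd).map _).mul (spectrum.notMem_iff.1 hcd)

theorem mul_lt_of_div_le_of_mul_lt {𝕜 : Type*} [Field 𝕜] [LinearOrder 𝕜] [IsStrictOrderedRing 𝕜]
    {a b m r : 𝕜} (hb : 0 < b) (hr : 0 ≤ r) (ham : a / b ≤ m) (hm : m * r < 1) : a * r < b := by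
  have h := (mul_le_mul_of_nonneg_right ham hr).trans_lt hm
  rwa [div_mul_eq_mul_div, div_lt_one hb] at h

theorem mul_lt_of_sub_mul_lt_one_sub {β δ μ x : ℝ} (hμ : 0 ≤ μ) (hdom : μ < β * δ)
    (hδμ : 0 < δ - μ) (hx : (δ - μ) * x < 1 - β) : μ * x < β := by
  refine lt_of_mul_lt_mul_left ?_ hδμ.le
  calc (δ - μ) * (μ * x) = μ * ((δ - μ) * x) := by ring
    _ ≤ μ * (1 - β) := mul_le_mul_of_nonneg_left hx.le hμ
    _ < (δ - μ) * β := by linarith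

theorem stmt2_general {n : ℕ} (G : Matrix (Fin n) (Fin n) ℝ)
    (β δ μ : ℝ) (hβ0 : 0 < β) (hβ1 : β < 1) (hδ : 0 < δ) (hμ : 0 ≤ μ)
    (hdom : μ < β * δ)
    (hspec : max ((δ + μ) / (1 + β)) ((δ - μ) / (1 - β)) * specRad G < 1) :
    (∀ l ∈ spectrum ℝ G, 0 < β - μ * l) ∧
      IsUnit
        (((1 - β) • (1 : Matrix (Fin n) (Fin n) ℝ) - (δ - μ) • G)⁻¹ -
          ((1 + β) • (1 : Matrix (Fin n) (Fin n) ℝ) - (δ + μ) • G)⁻¹) := by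
  have hδμ : 0 < δ - μ := by nlinarith
  have bounds : ∀ l ∈ spectrum ℝ G, (δ + μ) * l < 1 + β ∧ (δ - μ) * l < 1 - β := by
    intro l hl
    have hρ : 0 ≤ specRad G := (abs_nonneg l).trans (abs_le_specRad G hl)
    have hlρ : l ≤ specRad G := (le_abs_self l).trans (abs_le_specRad G hl)
    constructor
    · calc (δ + μ) * l ≤ (δ + μ) * specRad G := by gcongr
        _ < 1 + β := mul_lt_of_div_le_of_mul_lt (by linarith) hρ (le_max_left _ _) hspec
    · calc (δ - μ) * l ≤ (δ - μ) * specRad G := by gcongr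
        _ < 1 - β := mul_lt_of_div_le_of_mul_lt (by linarith) hρ (le_max_right _ _) hspec
  have hμl : ∀ l ∈ spectrum ℝ G, μ * l < β := fun l hl =>
    mul_lt_of_sub_mul_lt_one_sub hμ hdom hδμ (bounds l hl).2
  refine ⟨fun l hl => sub_pos.2 (hμl l hl), ?_⟩
  have hA : IsUnit ((1 - β) • (1 : Matrix (Fin n) (Fin n) ℝ) - (δ - μ) • G) :=
    isUnit_smul_one_sub_smul (by linarith) fun l hl => (bounds l hl).2.ne'
  have hB : IsUnit ((1 + β) • (1 : Matrix (Fin n) (Fin n) ℝ) - (δ + μ) • G) :=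
    isUnit_smul_one_sub_smul (by linarith) fun l hl => (bounds l hl).1.ne'
  have hBA : IsUnit ((2 * β) • (1 : Matrix (Fin n) (Fin n) ℝ) - (2 * μ) • G) :=
    isUnit_smul_one_sub_smul (by positivity) fun l hl => by linarith [hμl l hl]
  rw [Matrix.inv_sub_inv (iff_of_true hA hB)]
  refine ((Matrix.isUnit_nonsing_inv_iff.2 hA).mul ?_).mul (Matrix.isUnit_nonsing_inv_iff.2 hB)
  convert hBA using 1
  module

theorem stmt2 {n : ℕ} (G : Matrix (Fin n) (Fin n) ℝ)
    (hGsymm : G.IsSymm) (hGnn : ∀ i j, 0 ≤ G i j)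
    (β δ μ : ℝ) (hβ0 : 0 < β) (hβ1 : β < 1) (hδ : 0 < δ) (hμ : 0 ≤ μ)
    (hdom : μ < β * δ)
    (hspec : max ((δ + μ) / (1 + β)) ((δ - μ) / (1 - β)) * specRad G < 1) :
    (∀ l ∈ spectrum ℝ G, 0 < β - μ * l) ∧
      IsUnit
        (((1 - β) • (1 : Matrix (Fin n) (Fin n) ℝ) - (δ - μ) • G)⁻¹ -
          ((1 + β) • (1 : Matrix (Fin n) (Fin n) ℝ) - (δ + μ) • G)⁻¹) :=
  stmt2_general G β δ μ hβ0 hβ1 hδ hμ hdom hspec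
end

section
/- Let G be an irreducible symmetric n×n nonnegative matrix, β ∈ (0,1), δ > 0, μ ≥ 0 with μ < βδ and max{(δ+μ)/(1+β), (δ−μ)/(1−β)}·ρ(G) < 1. Then all entries of M^- − M^+ are positive, where M^+ = ((1+β)I − (δ+μ)G)^{-1} and M^- = ((1−β)I − (δ−μ)G)^{-1}. -/
/-! Expanding both inverses as Neumann series, `M⁻ - M⁺ = ∑ₖ (c₋⁻¹ a₋ᵏ - c₊⁻¹ a₊ᵏ) Gᵏ` with
`c± = 1 ± β` and `a± = (δ ± μ)/(1 ± β)`. The condition `μ < βδ` gives `|a₊| < a₋`, and `c₊ > c₋`,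
so every coefficient is positive; as `G` is nonnegative every term is entrywise nonnegative,
and irreducibility makes some term positive at each entry `(i, j)`. Convergence for symmetric `G`
follows from the spectral theorem. -/

open Matrix

theorem abs_eigenvalues_le_specRad {n : ℕ} {G : Matrix (Fin n) (Fin n) ℝ} (hG : G.IsHermitian)
    (t : Fin n) : |hG.eigenvalues t| ≤ specRad G :=
  le_csSup (G.finite_spectrum.image _).bddAbove ⟨_, hG.eigenvalues_mem_spectrum_real t, rfl⟩

theorem specRad_nonneg {n : ℕ} (G : Matrix (Fin n) (Fin n) ℝ) : 0 ≤ specRad G :=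
  Real.sSup_nonneg <| by rintro - ⟨l, -, rfl⟩; exact abs_nonneg l

namespace Matrix

variable {ι : Type*} [Fintype ι] [DecidableEq ι]

theorem IsHermitian.summable_pow_smul {n : ℕ} {G : Matrix (Fin n) (Fin n) ℝ}
    (hG : G.IsHermitian) {a : ℝ} (ha : |a| * specRad G < 1) :
    Summable fun k : ℕ => (a • G) ^ k := by
  set D : Matrix (Fin n) (Fin n) ℝ := diagonal fun t => a * hG.eigenvalues t
  have hD : Summable fun k : ℕ => D ^ k := by
    simp_rw [D, diagonal_pow]
    refine Summable.matrix_diagonal (Pi.summable.2 fun t => ?_)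
    refine summable_geometric_of_abs_lt_one ?_
    rw [abs_mul]
    exact (mul_le_mul_of_nonneg_left (abs_eigenvalues_le_specRad hG t) (abs_nonneg a)).trans_lt ha
  have hconj : a • G = Unitary.conjStarAlgAut ℝ _ hG.eigenvectorUnitary D := by
    conv_lhs => rw [hG.spectral_theorem]
    rw [← map_smul, ← diagonal_smul]
    rfl
  simp_rw [hconj, ← map_pow, Unitary.conjStarAlgAut_apply]
  exact (hD.map (LinearMap.mulLeft ℝ _) (continuous_const.matrix_mul continuous_id)).map
    (LinearMap.mulRight ℝ _) (continuous_id.matrix_mul continuous_const)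

theorem hasSum_inv_smul_one_sub_smul {G : Matrix ι ι ℝ} {c d : ℝ} (hc : c ≠ 0)
    (hs : Summable fun k : ℕ => ((d / c) • G) ^ k) :
    HasSum (fun k : ℕ => (c⁻¹ * (d / c) ^ k) • G ^ k) (c • (1 : Matrix ι ι ℝ) - d • G)⁻¹ := by
  have hfactor : c • (1 : Matrix ι ι ℝ) - d • G = c • (1 - (d / c) • G) := by
    rw [smul_sub, smul_smul, mul_div_cancel₀ d hc]
  have hinv : (c • (1 : Matrix ι ι ℝ) - d • G)⁻¹ = c⁻¹ • ∑' k : ℕ, ((d / c) • G) ^ k := by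
    refine inv_eq_right_inv ?_
    rw [hfactor, smul_mul_smul_comm, mul_inv_cancel₀ hc, one_smul, hs.one_sub_mul_tsum_pow]
  rw [hinv]
  convert hs.hasSum.const_smul c⁻¹ using 2 with k
  rw [smul_pow, smul_smul]

theorem sub_apply_pos_of_hasSum_smul_pow {G P Q : Matrix ι ι ℝ} {p q : ℕ → ℝ}
    (hGnn : ∀ i j, 0 ≤ G i j) (hP : HasSum (fun k => p k • G ^ k) P)
    (hQ : HasSum (fun k => q k • G ^ k) Q) (hpq : ∀ k, p k < q k) {i j : ι} {k₀ : ℕ}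
    (hk₀ : 0 < (G ^ k₀) i j) : 0 < (Q - P) i j := by
  have hentry : HasSum (fun k => (q k - p k) * (G ^ k) i j) ((Q - P) i j) := by
    have := Pi.hasSum.1 (Pi.hasSum.1 (hQ.sub hP) i) j
    simpa only [← sub_smul, smul_apply, smul_eq_mul] using this
  refine hasSum_lt (f := 0) (fun k => ?_) ?_ hasSum_zero hentry (i := k₀)
  · exact mul_nonneg (sub_pos.2 (hpq k)).le (pow_apply_nonneg hGnn k i j)
  · exact mul_pos (sub_pos.2 (hpq k₀)) hk₀

end Matrix

theorem inv_mul_pow_lt_inv_mul_pow {a b c c' : ℝ} (hc' : 0 < c') (hc : c' < c) (hab : |a| < b)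
    (k : ℕ) : c⁻¹ * a ^ k < c'⁻¹ * b ^ k := by
  have hc0 : 0 < c := hc'.trans hc
  have hb : 0 < b := (abs_nonneg a).trans_lt hab
  calc c⁻¹ * a ^ k ≤ c⁻¹ * |a| ^ k := by gcongr c⁻¹ * ?_; rw [← abs_pow]; exact le_abs_self _
    _ ≤ c⁻¹ * b ^ k := by gcongr
    _ < c'⁻¹ * b ^ k := by gcongr

theorem abs_add_div_one_add_lt_sub_div_one_sub {β δ μ : ℝ} (hβ0 : 0 < β) (hβ1 : β < 1)
    (hδ : 0 < δ) (hdom : μ < β * δ) : |(δ + μ) / (1 + β)| < (δ - μ) / (1 - β) := by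
  rw [abs_div, abs_of_pos (by linarith : 0 < 1 + β), div_lt_div_iff₀ (by linarith) (by linarith),
    ← abs_of_pos (sub_pos.2 hβ1), ← abs_mul, abs_lt]
  constructor
  · nlinarith [mul_lt_mul_of_pos_left hdom hβ0, mul_pos (mul_pos hβ0 (sub_pos.2 hβ1)) hδ]
  · linarith

theorem stmt3_general {n : ℕ} (G : Matrix (Fin n) (Fin n) ℝ)
    (hGsymm : G.IsSymm) (hGnn : ∀ i j, 0 ≤ G i j)
    (hGirr : ∀ i j, ∃ k : ℕ, 0 < (G ^ k) i j)
    (β δ μ : ℝ) (hβ0 : 0 < β) (hβ1 : β < 1) (hδ : 0 < δ)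
    (hdom : μ < β * δ)
    (hspec : max ((δ + μ) / (1 + β)) ((δ - μ) / (1 - β)) * specRad G < 1) :
    ∀ i j,
      0 < (((1 - β) • (1 : Matrix (Fin n) (Fin n) ℝ) - (δ - μ) • G)⁻¹ -
            ((1 + β) • (1 : Matrix (Fin n) (Fin n) ℝ) - (δ + μ) • G)⁻¹) i j := by
  intro i j
  have hG : G.IsHermitian := isHermitian_iff_isSymm.2 hGsymm
  have hratio := abs_add_div_one_add_lt_sub_div_one_sub hβ0 hβ1 hδ hdom
  have hmax : (δ - μ) / (1 - β) * specRad G < 1 :=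
    (mul_le_mul_of_nonneg_right (le_max_right _ _) (specRad_nonneg G)).trans_lt hspec
  have hplus : HasSum (fun k : ℕ => ((1 + β)⁻¹ * ((δ + μ) / (1 + β)) ^ k) • G ^ k)
      ((1 + β) • (1 : Matrix (Fin n) (Fin n) ℝ) - (δ + μ) • G)⁻¹ := by
    refine hasSum_inv_smul_one_sub_smul (by positivity) (hG.summable_pow_smul ?_)
    exact (mul_le_mul_of_nonneg_right hratio.le (specRad_nonneg G)).trans_lt hmax
  have hminus : HasSum (fun k : ℕ => ((1 - β)⁻¹ * ((δ - μ) / (1 - β)) ^ k) • G ^ k)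
      ((1 - β) • (1 : Matrix (Fin n) (Fin n) ℝ) - (δ - μ) • G)⁻¹ := by
    refine hasSum_inv_smul_one_sub_smul (by linarith) (hG.summable_pow_smul ?_)
    rwa [abs_of_pos ((abs_nonneg _).trans_lt hratio)]
  obtain ⟨k₀, hk₀⟩ := hGirr i j
  exact sub_apply_pos_of_hasSum_smul_pow hGnn hplus hminus
    (inv_mul_pow_lt_inv_mul_pow (by linarith) (by linarith) hratio) hk₀

theorem stmt3 {n : ℕ} (G : Matrix (Fin n) (Fin n) ℝ)
    (hGsymm : G.IsSymm) (hGnn : ∀ i j, 0 ≤ G i j)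
    (hGirr : ∀ i j, ∃ k : ℕ, 0 < (G ^ k) i j)
    (β δ μ : ℝ) (hβ0 : 0 < β) (hβ1 : β < 1) (hδ : 0 < δ) (hμ : 0 ≤ μ)
    (hdom : μ < β * δ)
    (hspec : max ((δ + μ) / (1 + β)) ((δ - μ) / (1 - β)) * specRad G < 1) :
    ∀ i j,
      0 < (((1 - β) • (1 : Matrix (Fin n) (Fin n) ℝ) - (δ - μ) • G)⁻¹ -
            ((1 + β) • (1 : Matrix (Fin n) (Fin n) ℝ) - (δ + μ) • G)⁻¹) i j :=
  stmt3_general G hGsymm hGnn hGirr β δ μ hβ0 hβ1 hδ hdom hspec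
end
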